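/- arXiv:2101.06811 — 2 statements merged into one kernel-verified Lean document; each statement's English description precedes it below -/
import Mathlib

section
/- Let X be a finite nonempty set and let K be a Markov kernel from X to X. For any two probability distributions Q₀ and Q₁ on X, the pushforward distributions K∘Q₀ and K∘Q₁ satisfy d_TV(K∘Q₁, K∘Q₀) ≤ 1 − ∑_{x̃ ∈ X} min_{x ∈ X} K(x̃ | x). -/
/-- A probability distribution on a finite type: nonnegative and sums to one. -/
def IsProbDist {X : Type*} [Fintype X] (p : X → ℝ) : Prop :=
  (∀ x, 0 ≤ p x) ∧ ∑ x, p x = 1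

/-- Total variation distance between two distributions on a finite type. -/
noncomputable def dTV {X : Type*} [Fintype X] (p q : X → ℝ) : ℝ :=
  (1 / 2) * ∑ x, |p x - q x|

/-- A Markov kernel from `X` to `X`: `K x' x` is the probability of moving to `x'`
from `x`, so each column `K · x` is a probability distribution. -/
def IsMarkovKernel {X : Type*} [Fintype X] (K : X → X → ℝ) : Prop :=
  ∀ x, IsProbDist (fun x' => K x' x)

/-- Pushforward of a distribution `q` through a kernel `K`. -/
noncomputable def pushforward {X : Type*} [Fintype X] (K : X → X → ℝ) (q : X → ℝ) :
    X → ℝ := fun x' => ∑ x, K x' x * q x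

/-- Dobrushin-type contraction bound for the total variation distance
between pushforwards of two distributions through the same Markov kernel. -/
theorem tv_pushforward_le_one_sub_dobrushin
    {X : Type*} [Fintype X] [Nonempty X]
    (K : X → X → ℝ) (hK : IsMarkovKernel K)
    (Q0 Q1 : X → ℝ) (hQ0 : IsProbDist Q0) (hQ1 : IsProbDist Q1) :
    dTV (pushforward K Q1) (pushforward K Q0) ≤
      1 - ∑ x' : X, Finset.univ.inf' Finset.univ_nonempty (fun x => K x' x) := by
  classical
  set m : X → ℝ := fun x' => Finset.univ.inf' Finset.univ_nonempty (fun x => K x' x) with hm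
  have hmle : ∀ x' x, m x' ≤ K x' x := fun x' x =>
    Finset.inf'_le _ (Finset.mem_univ x)
  set S : ℝ := ∑ x' : X, m x' with hS
  -- the difference of Q's sums to zero
  have hdiff0 : ∑ x, (Q1 x - Q0 x) = 0 := by
    rw [Finset.sum_sub_distrib, hQ1.2, hQ0.2]; ring
  -- column sums of K are 1
  have hcol : ∀ x, ∑ x', K x' x = 1 := fun x => (hK x).2
  -- 1 - S ≥ 0
  obtain ⟨x0⟩ := ‹Nonempty X›
  have hS1 : S ≤ 1 := by
    rw [← hcol x0]
    exact Finset.sum_le_sum fun x' _ => hmle x' x0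
  -- key pointwise rewrite
  have hkey : ∀ x', pushforward K Q1 x' - pushforward K Q0 x'
      = ∑ x, (K x' x - m x') * (Q1 x - Q0 x) := by
    intro x'
    simp only [pushforward]
    rw [← Finset.sum_sub_distrib]
    have : ∑ x, m x' * (Q1 x - Q0 x) = 0 := by
      rw [← Finset.mul_sum, hdiff0, mul_zero]
    calc ∑ x, (K x' x * Q1 x - K x' x * Q0 x)
        = ∑ x, K x' x * (Q1 x - Q0 x) := by
          apply Finset.sum_congr rfl; intros; ring
      _ = ∑ x, (K x' x - m x') * (Q1 x - Q0 x) + ∑ x, m x' * (Q1 x - Q0 x) := by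
          rw [← Finset.sum_add_distrib]
          apply Finset.sum_congr rfl; intros; ring
      _ = ∑ x, (K x' x - m x') * (Q1 x - Q0 x) := by rw [this, add_zero]
  have hbound : ∀ x', |pushforward K Q1 x' - pushforward K Q0 x'|
      ≤ ∑ x, (K x' x - m x') * |Q1 x - Q0 x| := by
    intro x'
    rw [hkey x']
    calc |∑ x, (K x' x - m x') * (Q1 x - Q0 x)|
        ≤ ∑ x, |(K x' x - m x') * (Q1 x - Q0 x)| := Finset.abs_sum_le_sum_abs _ _
      _ = ∑ x, (K x' x - m x') * |Q1 x - Q0 x| := by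
          apply Finset.sum_congr rfl
          intro x _
          rw [abs_mul, abs_of_nonneg (by linarith [hmle x' x])]
  have hsum : ∑ x', |pushforward K Q1 x' - pushforward K Q0 x'|
      ≤ (1 - S) * ∑ x, |Q1 x - Q0 x| := by
    calc ∑ x', |pushforward K Q1 x' - pushforward K Q0 x'|
        ≤ ∑ x', ∑ x, (K x' x - m x') * |Q1 x - Q0 x| :=
          Finset.sum_le_sum fun x' _ => hbound x'
      _ = ∑ x, (∑ x', (K x' x - m x')) * |Q1 x - Q0 x| := by
          rw [Finset.sum_comm]
          apply Finset.sum_congr rfl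
          intro x _
          rw [Finset.sum_mul]
      _ = ∑ x, (1 - S) * |Q1 x - Q0 x| := by
          apply Finset.sum_congr rfl
          intro x _
          rw [Finset.sum_sub_distrib, hcol x]
      _ = (1 - S) * ∑ x, |Q1 x - Q0 x| := by rw [Finset.mul_sum]
  have htv2 : ∑ x, |Q1 x - Q0 x| ≤ 2 := by
    calc ∑ x, |Q1 x - Q0 x| ≤ ∑ x, (Q1 x + Q0 x) := by
          apply Finset.sum_le_sum
          intro x _
          have := hQ0.1 x; have := hQ1.1 x
          rw [abs_sub_le_iff]; constructor <;> linarith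
      _ = 2 := by rw [Finset.sum_add_distrib, hQ1.2, hQ0.2]; norm_num
  rw [dTV]
  have : (1 - S) * ∑ x, |Q1 x - Q0 x| ≤ (1 - S) * 2 :=
    mul_le_mul_of_nonneg_left htv2 (by linarith)
  linarith
end

section
/- Let X be a finite nonempty set and let ε ≥ 0. If a Markov kernel K from X to X is ε-differentially private, then for any two probability distributions Q₀ and Q₁ on X, the pushforward distributions satisfy d_TV(K∘Q₁, K∘Q₀) ≤ 1 − exp(−ε). -/
/-- `K` is `ε`-differentially private. -/
def IsDP {X : Type*} [Fintype X] (ε : ℝ) (K : X → X → ℝ) : Prop :=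
  ∀ x' x x'', K x' x ≤ Real.exp ε * K x' x''

/-- Corollary 1: under `ε`-differential privacy, the total variation
distance between the pushforward distributions is at most `1 - exp (-ε)`. -/
theorem tv_pushforward_le_one_sub_exp_neg_eps
    {X : Type*} [Fintype X] [Nonempty X]
    (ε : ℝ) (hε : 0 ≤ ε)
    (K : X → X → ℝ) (hK : IsMarkovKernel K) (hDP : IsDP ε K)
    (Q0 Q1 : X → ℝ) (hQ0 : IsProbDist Q0) (hQ1 : IsProbDist Q1) :
    dTV (pushforward K Q1) (pushforward K Q0) ≤ 1 - Real.exp (-ε) := by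
  obtain ⟨x₀⟩ := (inferInstance : Nonempty X)
  set m : X → ℝ := fun x' => Real.exp (-ε) * K x' x₀ with hm
  have hmle : ∀ x' x, m x' ≤ K x' x := by
    intro x' x
    have h := hDP x' x₀ x
    calc m x' = Real.exp (-ε) * K x' x₀ := rfl
      _ ≤ Real.exp (-ε) * (Real.exp ε * K x' x) :=
          mul_le_mul_of_nonneg_left h (Real.exp_pos _).le
      _ = K x' x := by rw [← mul_assoc, ← Real.exp_add]; simp
  have hdiff : ∀ x', pushforward K Q1 x' - pushforward K Q0 x'
      = ∑ x, (K x' x - m x') * (Q1 x - Q0 x) := by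
    intro x'
    have h0 : ∑ x, m x' * (Q1 x - Q0 x) = 0 := by
      rw [← Finset.mul_sum, Finset.sum_sub_distrib, hQ1.2, hQ0.2]; ring
    have h1 : ∑ x, (K x' x - m x') * (Q1 x - Q0 x)
        = ∑ x, K x' x * (Q1 x - Q0 x) - ∑ x, m x' * (Q1 x - Q0 x) := by
      rw [← Finset.sum_sub_distrib]; apply Finset.sum_congr rfl; intros; ring
    rw [h1, h0, sub_zero]
    simp only [pushforward]
    rw [← Finset.sum_sub_distrib]
    apply Finset.sum_congr rfl; intros; ring
  have habs : ∀ x', |pushforward K Q1 x' - pushforward K Q0 x'|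
      ≤ ∑ x, (K x' x - m x') * |Q1 x - Q0 x| := by
    intro x'
    rw [hdiff x']
    refine (Finset.abs_sum_le_sum_abs _ _).trans (Finset.sum_le_sum ?_)
    intro x _
    rw [abs_mul, abs_of_nonneg (sub_nonneg.2 (hmle x' x))]
  have hsum : ∑ x', ∑ x, (K x' x - m x') * |Q1 x - Q0 x|
      = (1 - Real.exp (-ε)) * ∑ x, |Q1 x - Q0 x| := by
    rw [Finset.sum_comm, Finset.mul_sum]
    apply Finset.sum_congr rfl
    intro x _
    rw [← Finset.sum_mul]
    congr 1
    rw [Finset.sum_sub_distrib, (hK x).2]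
    congr 1
    simp only [hm, ← Finset.mul_sum]
    rw [(hK x₀).2, mul_one]
  have hQsum : ∑ x, |Q1 x - Q0 x| ≤ 2 := by
    calc ∑ x, |Q1 x - Q0 x| ≤ ∑ x, (Q1 x + Q0 x) := by
          apply Finset.sum_le_sum
          intro x _
          exact (abs_sub (Q1 x) (Q0 x)).trans (by
            rw [abs_of_nonneg (hQ1.1 x), abs_of_nonneg (hQ0.1 x)])
      _ = 2 := by rw [Finset.sum_add_distrib, hQ1.2, hQ0.2]; norm_num
  have hepos : 0 ≤ 1 - Real.exp (-ε) := by
    have : Real.exp (-ε) ≤ 1 := Real.exp_le_one_iff.2 (by linarith)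
    linarith
  calc dTV (pushforward K Q1) (pushforward K Q0)
      ≤ (1 / 2) * ∑ x', ∑ x, (K x' x - m x') * |Q1 x - Q0 x| := by
        unfold dTV
        apply mul_le_mul_of_nonneg_left (Finset.sum_le_sum fun x' _ => habs x') (by norm_num)
    _ = (1 / 2) * ((1 - Real.exp (-ε)) * ∑ x, |Q1 x - Q0 x|) := by rw [hsum]
    _ ≤ (1 / 2) * ((1 - Real.exp (-ε)) * 2) := by
        apply mul_le_mul_of_nonneg_left (mul_le_mul_of_nonneg_left hQsum hepos) (by norm_num)
    _ = 1 - Real.exp (-ε) := by ring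
end
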